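/- arXiv:math/0305237 — 4 statements merged into one kernel-verified Lean document; each statement's English description precedes it below -/
import Mathlib

section
/- Let θ be a C² function on an open interval J ⊂ (0,∞) with positive values and θ'(s) < 0 for all s ∈ J, and let τ = θ⁻¹ be its inverse function, defined on θ(J). Then for every s ∈ J, writing u = θ(s), the conditions [θ'(s) < 1 and 2 s θ(s) θ''(s) < (1 − θ'(s)) (s θ'(s)² + θ(s))] hold if and only if the conditions [τ'(u) < 1 and 2 u τ(u) τ''(u) < (1 − τ'(u)) (u τ'(u)² + τ(u))] hold. -/
/-!
Differentiating `τ (θ s) = s` twice gives `τ'(θ s) θ'(s) = 1` and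
`τ''(θ s) θ'(s)² + τ'(θ s) θ''(s) = 0`, i.e. `τ' = 1/θ'` and `τ'' = -θ'' τ'³` at `u = θ s`.
Substituting these into the condition for `τ` at `u` and multiplying by `-θ'(s)³ > 0` turns it into
the condition for `θ` at `s`; the constraint `θ' < 1` resp. `τ' < 1` is automatic since both
derivatives are negative.
-/

open Set Filter Topology

section InverseDerivatives

variable {𝕜 : Type*} [NontriviallyNormedField 𝕜] {f g : 𝕜 → 𝕜} {x : 𝕜}

theorem deriv_comp_mul_deriv_eq_one (hf : DifferentiableAt 𝕜 f x)
    (hg : DifferentiableAt 𝕜 g (f x)) (hgf : ∀ᶠ y in 𝓝 x, g (f y) = y) :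
    deriv g (f x) * deriv f x = 1 := by
  have hcomp : HasDerivAt (g ∘ f) (deriv g (f x) * deriv f x) x :=
    hg.hasDerivAt.comp x hf.hasDerivAt
  exact (hcomp.congr_of_eventuallyEq (hgf.mono fun _ h => h.symm)).unique (hasDerivAt_id x)

theorem deriv_deriv_comp_mul_sq_add (hf : DifferentiableAt 𝕜 f x)
    (hf' : DifferentiableAt 𝕜 (deriv f) x) (hg' : DifferentiableAt 𝕜 (deriv g) (f x))
    (hgf : ∀ᶠ y in 𝓝 x, deriv g (f y) * deriv f y = 1) :
    deriv (deriv g) (f x) * deriv f x ^ 2 + deriv g (f x) * deriv (deriv f) x = 0 := by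
  have hprod : HasDerivAt (fun y => deriv g (f y) * deriv f y)
      (deriv (deriv g) (f x) * deriv f x * deriv f x + deriv g (f x) * deriv (deriv f) x) x :=
    (hg'.hasDerivAt.comp x hf.hasDerivAt).mul hf'.hasDerivAt
  have h := (hprod.congr_of_eventuallyEq (hgf.mono fun _ h => h.symm)).unique
    (hasDerivAt_const x 1)
  linear_combination h

theorem ContDiffOn.differentiableAt_deriv {s : Set 𝕜} (hf : ContDiffOn 𝕜 2 f s)
    (hs : IsOpen s) (hx : x ∈ s) : DifferentiableAt 𝕜 (deriv f) x :=
  ((hf.deriv_of_isOpen hs le_rfl).contDiffAt (hs.mem_nhds hx)).differentiableAt one_ne_zero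

end InverseDerivatives

section JetCondition

/-- The condition of the theorem for a function with value `u`, first derivative `p` and second
derivative `q` at the point `s`. -/
def JetCondition (s u p q : ℝ) : Prop :=
  p < 1 ∧ 2 * s * u * q < (1 - p) * (s * p ^ 2 + u)

variable {s u p q t r : ℝ}

theorem JetCondition.of_inverse (hp : p < 0) (hpt : t * p = 1) (hr : r = -q * t ^ 3)
    (h : JetCondition s u p q) : JetCondition u s t r := by
  have ht : t < 0 := by nlinarith
  have hcube : 0 < -t ^ 3 := by nlinarith [pow_pos (neg_pos.mpr ht) 3]
  refine ⟨by linarith, ?_⟩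
  calc 2 * u * s * r = -t ^ 3 * (2 * s * u * q) := by rw [hr]; ring
    _ < -t ^ 3 * ((1 - p) * (s * p ^ 2 + u)) := mul_lt_mul_of_pos_left h.2 hcube
    _ = (1 - t) * (u * t ^ 2 + s) := by
      linear_combination (s * (t ^ 2 * p ^ 2 + t * p + 1) - s * t * (1 + t * p) + u * t ^ 2) * hpt

theorem jetCondition_iff_of_inverse (hp : p < 0) (hpt : t * p = 1)
    (hrq : r * p ^ 2 + t * q = 0) : JetCondition s u p q ↔ JetCondition u s t r := by
  have ht : t < 0 := by nlinarith
  refine ⟨JetCondition.of_inverse hp hpt ?_, JetCondition.of_inverse ht (by linarith) ?_⟩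
  · linear_combination t ^ 2 * hrq + (-(r * p * t) - r) * hpt
  · linear_combination p * hrq - q * hpt

end JetCondition

theorem stmt_10_general (a b : ℝ) (θ τ : ℝ → ℝ)
    (hθ : ContDiffOn ℝ 2 θ (Ioo a b))
    (hθ' : ∀ s ∈ Ioo a b, deriv θ s < 0)
    (hinv : ∀ s ∈ Ioo a b, τ (θ s) = s)
    (hopen : IsOpen (θ '' Ioo a b))
    (hτ : ContDiffOn ℝ 2 τ (θ '' Ioo a b)) :
    ∀ s ∈ Ioo a b,
      ((deriv θ s < 1 ∧
          2 * s * θ s * deriv (deriv θ) s <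
            (1 - deriv θ s) * (s * (deriv θ s) ^ 2 + θ s))
        ↔ (deriv τ (θ s) < 1 ∧
          2 * θ s * τ (θ s) * deriv (deriv τ) (θ s) <
            (1 - deriv τ (θ s)) * (θ s * (deriv τ (θ s)) ^ 2 + τ (θ s)))) := by
  intro s hs
  have hJ : ∀ x ∈ Ioo a b, Ioo a b ∈ 𝓝 x := fun x hx => isOpen_Ioo.mem_nhds hx
  have hθdiff : ∀ x ∈ Ioo a b, DifferentiableAt ℝ θ x := fun x hx =>
    (hθ.contDiffAt (hJ x hx)).differentiableAt two_ne_zero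
  have hτdiff : ∀ x ∈ Ioo a b, DifferentiableAt ℝ τ (θ x) := fun x hx =>
    (hτ.contDiffAt (hopen.mem_nhds (mem_image_of_mem θ hx))).differentiableAt two_ne_zero
  have hfirst : ∀ x ∈ Ioo a b, deriv τ (θ x) * deriv θ x = 1 := fun x hx =>
    deriv_comp_mul_deriv_eq_one (hθdiff x hx) (hτdiff x hx) (eventually_of_mem (hJ x hx) hinv)
  have hsecond := deriv_deriv_comp_mul_sq_add (hθdiff s hs)
    (hθ.differentiableAt_deriv isOpen_Ioo hs)
    (hτ.differentiableAt_deriv hopen (mem_image_of_mem θ hs)) (eventually_of_mem (hJ s hs) hfirst)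
  rw [hinv s hs]
  exact jetCondition_iff_of_inverse (hθ' s hs) (hfirst s hs) hsecond

theorem stmt_10 (a b : ℝ) (ha : 0 ≤ a) (θ τ : ℝ → ℝ)
    (hθ : ContDiffOn ℝ 2 θ (Ioo a b))
    (hθpos : ∀ s ∈ Ioo a b, 0 < θ s)
    (hθ' : ∀ s ∈ Ioo a b, deriv θ s < 0)
    (hinv : ∀ s ∈ Ioo a b, τ (θ s) = s)
    (hopen : IsOpen (θ '' Ioo a b))
    (hτ : ContDiffOn ℝ 2 τ (θ '' Ioo a b)) :
    ∀ s ∈ Ioo a b,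
      ((deriv θ s < 1 ∧
          2 * s * θ s * deriv (deriv θ) s <
            (1 - deriv θ s) * (s * (deriv θ s) ^ 2 + θ s))
        ↔ (deriv τ (θ s) < 1 ∧
          2 * θ s * τ (θ s) * deriv (deriv τ) (θ s) <
            (1 - deriv τ (θ s)) * (θ s * (deriv τ (θ s)) ^ 2 + τ (θ s)))) :=
  stmt_10_general a b θ τ hθ hθ' hinv hopen hτ
end

section
/- Let n ≥ 1, k ∈ {1,…,n}, write ζ = (z,w) ∈ ℂᵏ × ℂ^{n−k} with z = x+iy, w = u+iv, let A be a k×k real symmetric positive definite matrix and B an (n−k)×(n−k) real symmetric positive definite matrix, and set ρ(z,w) = ⟨Ay,y⟩ + ⟨Bv,v⟩ + |u|² − |x|². Then ρ is strongly plurisubharmonic on ℂⁿ (i.e. L_ρ(ζ; w) > 0 for every ζ ∈ ℂⁿ and every nonzero w ∈ ℂⁿ) if and only if A − I is positive definite, where I is the k×k identity matrix. -/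
/-!
`ρ` is the diagonal `ζ ↦ b(ζ, ζ)` of a real bilinear form `b`, so its real Hessian is `2b` and
`L_ρ(ζ; v) = (b(v, v) + b(iv, iv)) / 2`. Multiplication by `i` sends `(a + ic, p + iq)` to
`(-c + ia, -q + ip)`, hence
`2 L_ρ(ζ; v) = ⟨(A - I)a, a⟩ + ⟨(A - I)c, c⟩ + ⟨(B + I)p, p⟩ + ⟨(B + I)q, q⟩`,
independently of `ζ`. This is positive for all `v ≠ 0` when `A - I` is positive definite, and
testing `v = (a, 0)` with `a` real gives the converse.
-/

open Complex Set

/-- The Levi form of a `C²` function `ρ` at `ζ` in direction `v`: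
`4 L_ρ(ζ;v) = H_ζ(v,v) + H_ζ(iv,iv)` where `H_ζ` is the second real Fréchet derivative. -/
noncomputable def leviForm {E : Type*} [NormedAddCommGroup E] [NormedSpace ℂ E]
    (ρ : E → ℝ) (p v : E) : ℝ :=
  (iteratedFDeriv ℝ 2 ρ p ![v, v]
    + iteratedFDeriv ℝ 2 ρ p ![Complex.I • v, Complex.I • v]) / 4

/-- `Q(y,w) = ⟨Ay,y⟩ + ⟨Bv,v⟩ + |u|²` for `ζ = (z,w) = (x+iy, u+iv) ∈ ℂᵏ × ℂ^{n-k}`. -/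
def Qfun {k m : ℕ} (A : Matrix (Fin k) (Fin k) ℝ) (B : Matrix (Fin m) (Fin m) ℝ)
    (ζ : (Fin k → ℂ) × (Fin m → ℂ)) : ℝ :=
  (∑ i, ∑ j, A i j * (ζ.1 i).im * (ζ.1 j).im)
    + (∑ i, ∑ j, B i j * (ζ.2 i).im * (ζ.2 j).im)
    + ∑ i, (ζ.2 i).re ^ 2

open Matrix

theorem iteratedFDeriv_two_apply_bilinear_diag {𝕜 E F : Type*} [NontriviallyNormedField 𝕜]
    [NormedAddCommGroup E] [NormedSpace 𝕜 E] [NormedAddCommGroup F] [NormedSpace 𝕜 F]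
    (b : E →L[𝕜] E →L[𝕜] F) (p v w : E) :
    iteratedFDeriv 𝕜 2 (fun x => b x x) p ![v, w] = b v w + b w v := by
  have hderiv : fderiv 𝕜 (fun x => b x x) = ⇑(b + b.flip) := by
    ext x y
    rw [HasFDerivAt.fderiv (f := fun x => b x x)
      (b.hasFDerivAt_of_bilinear (hasFDerivAt_id x) (hasFDerivAt_id x))]
    simp
  rw [iteratedFDeriv_two_apply, hderiv, (b + b.flip).fderiv]
  simp

theorem leviForm_bilinear_diag {E : Type*} [NormedAddCommGroup E] [NormedSpace ℂ E]
    [FiniteDimensional ℝ E] (b : E →ₗ[ℝ] E →ₗ[ℝ] ℝ) (p v : E) :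
    leviForm (fun x => b x x) p v = (b v v + b (I • v) (I • v)) / 2 := by
  have h := iteratedFDeriv_two_apply_bilinear_diag b.toContinuousBilinearMap p
  simp only [LinearMap.toContinuousBilinearMap_apply] at h
  rw [leviForm, h, h]
  ring

section QuadReIm

variable {ι : Type*} [Fintype ι]

/-- For real symmetric `M` this is the Hermitian form `z* M z`. -/
def quadReIm (M : Matrix ι ι ℝ) (z : ι → ℂ) : ℝ :=
  (fun i => (z i).re) ⬝ᵥ M *ᵥ (fun i => (z i).re)
    + (fun i => (z i).im) ⬝ᵥ M *ᵥ (fun i => (z i).im)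

theorem quadReIm_ofReal (M : Matrix ι ι ℝ) (x : ι → ℝ) :
    quadReIm M (fun i => (x i : ℂ)) = x ⬝ᵥ M *ᵥ x := by
  simp [quadReIm]

theorem quadReIm_zero (M : Matrix ι ι ℝ) : quadReIm M 0 = 0 := by
  simp [quadReIm]

theorem Matrix.PosSemidef.quadReIm_nonneg {M : Matrix ι ι ℝ} (hM : M.PosSemidef) (z : ι → ℂ) :
    0 ≤ quadReIm M z := by
  have h := hM.dotProduct_mulVec_nonneg
  simp only [star_trivial] at h
  exact add_nonneg (h _) (h _)

theorem Matrix.PosDef.quadReIm_pos {M : Matrix ι ι ℝ} (hM : M.PosDef) {z : ι → ℂ} (hz : z ≠ 0) :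
    0 < quadReIm M z := by
  have hpos : ∀ x : ι → ℝ, x ≠ 0 → 0 < x ⬝ᵥ M *ᵥ x := fun x hx => by
    simpa using hM.dotProduct_mulVec_pos hx
  have hnonneg : ∀ x : ι → ℝ, 0 ≤ x ⬝ᵥ M *ᵥ x := fun x => by
    simpa using hM.posSemidef.dotProduct_mulVec_nonneg x
  by_cases hre : (fun i => (z i).re) = 0
  · have him : (fun i => (z i).im) ≠ 0 := fun him => hz <| funext fun i =>
      Complex.ext (congrFun hre i) (congrFun him i)
    exact add_pos_of_nonneg_of_pos (hnonneg _) (hpos _ him)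
  · exact add_pos_of_pos_of_nonneg (hpos _ hre) (hnonneg _)

theorem Matrix.PosDef.quadReIm_add_quadReIm_pos {κ : Type*} [Fintype κ] {M : Matrix ι ι ℝ}
    {N : Matrix κ κ ℝ} (hM : M.PosDef) (hN : N.PosDef) {v : (ι → ℂ) × (κ → ℂ)} (hv : v ≠ 0) :
    0 < quadReIm M v.1 + quadReIm N v.2 := by
  by_cases h₁ : v.1 = 0
  · have h₂ : v.2 ≠ 0 := fun h₂ => hv (Prod.ext h₁ h₂)
    exact add_pos_of_nonneg_of_pos (hM.posSemidef.quadReIm_nonneg _) (hN.quadReIm_pos h₂)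
  · exact add_pos_of_pos_of_nonneg (hM.quadReIm_pos h₁) (hN.posSemidef.quadReIm_nonneg _)

end QuadReIm

section Rho

variable {k m : ℕ}

/-- The real bilinear form whose diagonal is `ρ(x + iy, u + iv) = ⟨Ay,y⟩ + ⟨Bv,v⟩ + |u|² - |x|²`. -/
noncomputable def rhoBilin (A : Matrix (Fin k) (Fin k) ℝ) (B : Matrix (Fin m) (Fin m) ℝ) :
    ((Fin k → ℂ) × (Fin m → ℂ)) →ₗ[ℝ] ((Fin k → ℂ) × (Fin m → ℂ)) →ₗ[ℝ] ℝ :=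
  let x := (reLm.compLeft (Fin k)).comp (LinearMap.fst ℝ _ (Fin m → ℂ))
  let y := (imLm.compLeft (Fin k)).comp (LinearMap.fst ℝ _ (Fin m → ℂ))
  let u := (reLm.compLeft (Fin m)).comp (LinearMap.snd ℝ (Fin k → ℂ) _)
  let v := (imLm.compLeft (Fin m)).comp (LinearMap.snd ℝ (Fin k → ℂ) _)
  (toLinearMap₂' ℝ A).compl₁₂ y y + (toLinearMap₂' ℝ B).compl₁₂ v v
    + (toLinearMap₂' ℝ 1).compl₁₂ u u - (toLinearMap₂' ℝ 1).compl₁₂ x x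

theorem rhoBilin_apply_self (A : Matrix (Fin k) (Fin k) ℝ) (B : Matrix (Fin m) (Fin m) ℝ)
    (ζ : (Fin k → ℂ) × (Fin m → ℂ)) :
    rhoBilin A B ζ ζ = (fun i => (ζ.1 i).im) ⬝ᵥ A *ᵥ (fun i => (ζ.1 i).im)
      + (fun i => (ζ.2 i).im) ⬝ᵥ B *ᵥ (fun i => (ζ.2 i).im)
      + (fun i => (ζ.2 i).re) ⬝ᵥ (fun i => (ζ.2 i).re)
      - (fun i => (ζ.1 i).re) ⬝ᵥ (fun i => (ζ.1 i).re) := by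
  simp only [rhoBilin, LinearMap.sub_apply, LinearMap.add_apply, LinearMap.compl₁₂_apply,
    LinearMap.coe_comp, LinearMap.coe_fst, LinearMap.coe_snd, Function.comp_apply,
    toLinearMap₂'_apply', one_mulVec]
  rfl

theorem Qfun_sub_eq_rhoBilin (A : Matrix (Fin k) (Fin k) ℝ) (B : Matrix (Fin m) (Fin m) ℝ)
    (ζ : (Fin k → ℂ) × (Fin m → ℂ)) :
    Qfun A B ζ - ∑ i, (ζ.1 i).re ^ 2 = rhoBilin A B ζ ζ := by
  simp only [rhoBilin_apply_self, Qfun, dotProduct, mulVec, Finset.mul_sum, sq]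
  congr 3 <;> exact Finset.sum_congr rfl fun i _ => Finset.sum_congr rfl fun j _ => by ring

theorem rhoBilin_add_rhoBilin_I_smul (A : Matrix (Fin k) (Fin k) ℝ)
    (B : Matrix (Fin m) (Fin m) ℝ) (v : (Fin k → ℂ) × (Fin m → ℂ)) :
    rhoBilin A B v v + rhoBilin A B (I • v) (I • v)
      = quadReIm (A - 1) v.1 + quadReIm (B + 1) v.2 := by
  have hre : ∀ {ι : Type} (z : ι → ℂ), (fun i => ((I • z) i).re) = -fun i => (z i).im := by
    intro ι z; ext i; simp
  have him : ∀ {ι : Type} (z : ι → ℂ), (fun i => ((I • z) i).im) = fun i => (z i).re := by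
    intro ι z; ext i; simp
  simp only [rhoBilin_apply_self, Prod.smul_fst, Prod.smul_snd, hre, him, neg_dotProduct,
    dotProduct_neg, neg_neg, quadReIm, sub_mulVec, add_mulVec, one_mulVec, dotProduct_sub,
    dotProduct_add]
  ring

theorem leviForm_Qfun_sub (A : Matrix (Fin k) (Fin k) ℝ) (B : Matrix (Fin m) (Fin m) ℝ)
    (ζ v : (Fin k → ℂ) × (Fin m → ℂ)) :
    leviForm (fun ζ => Qfun A B ζ - ∑ i, (ζ.1 i).re ^ 2) ζ v
      = (quadReIm (A - 1) v.1 + quadReIm (B + 1) v.2) / 2 := by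
  simp only [Qfun_sub_eq_rhoBilin, leviForm_bilinear_diag, rhoBilin_add_rhoBilin_I_smul]

end Rho

theorem stmt_16_general {k m : ℕ}
    (A : Matrix (Fin k) (Fin k) ℝ) (hAsymm : A.IsSymm)
    (B : Matrix (Fin m) (Fin m) ℝ) (hBpd : B.PosDef) :
    (∀ ζ v : (Fin k → ℂ) × (Fin m → ℂ), v ≠ 0 →
      0 < leviForm (fun ζ => Qfun A B ζ - ∑ i, (ζ.1 i).re ^ 2) ζ v)
    ↔ (A - 1).PosDef := by
  simp only [leviForm_Qfun_sub, div_pos_iff_of_pos_right (two_pos (α := ℝ))]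
  refine ⟨fun h => .of_dotProduct_mulVec_pos ?_ fun x hx => ?_,
    fun hA _ v hv => hA.quadReIm_add_quadReIm_pos (hBpd.add .one) hv⟩
  · exact (isHermitian_iff_isSymm.mpr hAsymm).sub isHermitian_one
  · have hv : ((fun i => (x i : ℂ)), (0 : Fin m → ℂ)) ≠ 0 := by
      simpa [funext_iff] using hx
    simpa [quadReIm_ofReal, quadReIm_zero] using h 0 _ hv

theorem stmt_16 {k m : ℕ} (hk : 1 ≤ k)
    (A : Matrix (Fin k) (Fin k) ℝ) (hAsymm : A.IsSymm) (hApd : A.PosDef)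
    (B : Matrix (Fin m) (Fin m) ℝ) (hBsymm : B.IsSymm) (hBpd : B.PosDef) :
    (∀ ζ v : (Fin k → ℂ) × (Fin m → ℂ), v ≠ 0 →
      0 < leviForm (fun ζ => Qfun A B ζ - ∑ i, (ζ.1 i).re ^ 2) ζ v)
    ↔ (A - 1).PosDef :=
  stmt_16_general A hAsymm B hBpd
end

section
/- Let n ≥ 1, k ∈ {1,…,n}, write ζ = (z,w) ∈ ℂᵏ × ℂ^{n−k} with z = x+iy, w = u+iv, let A be a k×k real symmetric matrix with A − I positive definite, B an (n−k)×(n−k) real symmetric positive definite matrix, and Q(y,w) = ⟨Ay,y⟩ + ⟨Bv,v⟩ + |u|². Let λ₁ > 1 denote the smallest eigenvalue of A. If h : [0,∞) → ℝ is a C^∞ function with h'(t) ≥ 0, h''(t) ≥ 0, h'(t) < λ₁ and 2 t h''(t) + h'(t) < λ₁ for all t ≥ 0, then τ(z,w) = Q(y,w) − h(|x|²) is strongly plurisubharmonic on ℂⁿ, i.e. L_τ(ζ; w) > 0 for every ζ ∈ ℂⁿ and every nonzero w ∈ ℂⁿ. -/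
/-!
The Levi form is read off from second derivatives along the real lines through `ζ` in the
directions `v` and `i v`. Along such a line `Q` is a quadratic polynomial and `|x|²` a
nonnegative one, so only the values of `h` on `[0, ∞)` enter, and the chain rule gives
`4 L(ζ; v) = 2 (Q(v) + Q(iv)) - h''(|x|²) (⟨2x, a⟩² + ⟨2x, b⟩²) - 2 h'(|x|²) (|a|² + |b|²)`,
where `a + i b` is the `z`-component of `v`. The eigenvalue bound for `A` and `B ≥ 0` give
`Q(v) + Q(iv) ≥ λ₁ (|a|² + |b|²) + |v_w|²`, and Cauchy–Schwarz bounds the `h''` term by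
`4 |x|² h''(|x|²) (|a|² + |b|²)`, so `4 L ≥ 2 (λ₁ - 2 |x|² h'' - h') (|a|² + |b|²) + 2 |v_w|² > 0`.
-/

open Complex Set

open scoped Matrix

@[fun_prop]
theorem Complex.contDiff_re {n : WithTop ℕ∞} : ContDiff ℝ n re := reCLM.contDiff

@[fun_prop]
theorem Complex.contDiff_im {n : WithTop ℕ∞} : ContDiff ℝ n im := imCLM.contDiff

theorem iteratedFDeriv_two_apply_self_eq_deriv_deriv {E : Type*} [NormedAddCommGroup E]
    [NormedSpace ℝ E] {f : E → ℝ} (hf : ContDiff ℝ 2 f) (p v : E) :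
    iteratedFDeriv ℝ 2 f p ![v, v] = deriv (deriv fun t : ℝ => f (p + t • v)) 0 := by
  have hline : ∀ t : ℝ, HasDerivAt (fun s : ℝ => p + s • v) v t := fun t => by
    simpa using ((hasDerivAt_id t).smul_const v).const_add p
  have hderiv : deriv (fun t : ℝ => f (p + t • v)) = fun t => fderiv ℝ f (p + t • v) v :=
    funext fun t =>
      ((hf.differentiable (by norm_num) _).hasFDerivAt.comp_hasDerivAt t (hline t)).deriv
  have hf' : HasFDerivAt (fderiv ℝ f) (fderiv ℝ (fderiv ℝ f) p) (p + (0 : ℝ) • v) := by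
    rw [zero_smul, add_zero]
    exact ((hf.fderiv_right (m := 1) (by norm_num)).differentiable one_ne_zero p).hasFDerivAt
  have hf'' : HasDerivAt (fun t : ℝ => fderiv ℝ f (p + t • v))
      (fderiv ℝ (fderiv ℝ f) p v) 0 := hf'.comp_hasDerivAt 0 (hline 0)
  rw [iteratedFDeriv_two_apply, hderiv, (hf''.clm_apply (hasDerivAt_const 0 v)).deriv]
  simp

theorem deriv_deriv_comp_of_forall_mem {s : Set ℝ} (hs : UniqueDiffOn ℝ s) {h : ℝ → ℝ}
    (hh : ContDiffOn ℝ 2 h s) {φ φ' : ℝ → ℝ} {φ'' x : ℝ} (hφ : ∀ t, HasDerivAt φ (φ' t) t)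
    (hφ' : HasDerivAt φ' φ'' x) (hφs : ∀ t, φ t ∈ s) :
    deriv (deriv fun t => h (φ t)) x
      = derivWithin (derivWithin h s) s (φ x) * φ' x ^ 2 + derivWithin h s (φ x) * φ'' := by
  have hchain : ∀ g : ℝ → ℝ, ContDiffOn ℝ 1 g s →
      ∀ t, HasDerivAt (fun t => g (φ t)) (derivWithin g s (φ t) * φ' t) t := fun g hg t =>
    ((hg.differentiableOn one_ne_zero _ (hφs t)).hasDerivWithinAt).comp_hasDerivAt t (hφ t)
      (Filter.Eventually.of_forall hφs)
  have hderiv : deriv (fun t => h (φ t)) = fun t => derivWithin h s (φ t) * φ' t :=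
    funext fun t => (hchain h (hh.of_le one_le_two) t).deriv
  rw [hderiv]
  exact (((hchain _ (hh.derivWithin hs le_rfl) x).mul hφ').congr_deriv (by ring)).deriv

theorem iteratedFDeriv_two_comp_apply_of_line_eq {E : Type*} [NormedAddCommGroup E]
    [NormedSpace ℝ E] {q : E → ℝ} (hq : ContDiff ℝ 2 q) {s : Set ℝ} (hs : UniqueDiffOn ℝ s)
    {h : ℝ → ℝ} (hh : ContDiffOn ℝ 2 h s) (hqs : ∀ ζ, q ζ ∈ s) {p d : E} {β : ℝ}
    (hline : ∀ t : ℝ, q (p + t • d) = q p + β * t + q d * t ^ 2) :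
    iteratedFDeriv ℝ 2 (fun ζ => h (q ζ)) p ![d, d]
      = derivWithin (derivWithin h s) s (q p) * β ^ 2
        + derivWithin h s (q p) * (2 * q d) := by
  rw [iteratedFDeriv_two_apply_self_eq_deriv_deriv (f := fun ζ => h (q ζ))
    (hh.comp_contDiff hq hqs)]
  have hφ : ∀ t : ℝ, HasDerivAt (fun t : ℝ => q (p + t • d)) (β + 2 * q d * t) t := by
    intro t
    rw [funext hline]
    exact ((((hasDerivAt_id t).const_mul β).const_add (q p)).add
      ((hasDerivAt_pow 2 t).const_mul (q d))).congr_deriv (by simp; ring)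
  have hφ' : HasDerivAt (fun t : ℝ => β + 2 * q d * t) (2 * q d) 0 := by
    simpa using ((hasDerivAt_id (0 : ℝ)).const_mul (2 * q d)).const_add β
  simpa using deriv_deriv_comp_of_forall_mem hs hh hφ hφ' fun t => hqs _

theorem iteratedFDeriv_two_apply_of_line_eq {E : Type*} [NormedAddCommGroup E]
    [NormedSpace ℝ E] {q : E → ℝ} (hq : ContDiff ℝ 2 q) {p d : E} {β : ℝ}
    (hline : ∀ t : ℝ, q (p + t • d) = q p + β * t + q d * t ^ 2) :
    iteratedFDeriv ℝ 2 q p ![d, d] = 2 * q d := by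
  simpa using iteratedFDeriv_two_comp_apply_of_line_eq hq uniqueDiffOn_univ
    (contDiffOn_id (s := univ)) (fun _ => mem_univ _) hline

theorem Finset.sum_add_mul_sq {ι : Type*} (s : Finset ι) (u a : ι → ℝ) (t : ℝ) :
    ∑ i ∈ s, (u i + t * a i) ^ 2
      = ∑ i ∈ s, u i ^ 2 + (∑ i ∈ s, 2 * u i * a i) * t + (∑ i ∈ s, a i ^ 2) * t ^ 2 := by
  rw [Finset.sum_mul, Finset.sum_mul, ← Finset.sum_add_distrib, ← Finset.sum_add_distrib]
  exact Finset.sum_congr rfl fun i _ => by ring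

theorem Matrix.sum_sum_mul_add_mul {ι : Type*} [Fintype ι] (M : Matrix ι ι ℝ) (y a : ι → ℝ)
    (t : ℝ) :
    ∑ i, ∑ j, M i j * (y i + t * a i) * (y j + t * a j)
      = ∑ i, ∑ j, M i j * y i * y j + (∑ i, ∑ j, M i j * (y i * a j + a i * y j)) * t
        + (∑ i, ∑ j, M i j * a i * a j) * t ^ 2 := by
  rw [Finset.sum_mul, Finset.sum_mul, ← Finset.sum_add_distrib, ← Finset.sum_add_distrib]
  refine Finset.sum_congr rfl fun i _ => ?_
  rw [Finset.sum_mul, Finset.sum_mul, ← Finset.sum_add_distrib, ← Finset.sum_add_distrib]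
  exact Finset.sum_congr rfl fun j _ => by ring

theorem Matrix.dotProduct_mulVec_self_eq_sum_sum {n : Type*} [Fintype n]
    (M : Matrix n n ℝ) (c : n → ℝ) :
    c ⬝ᵥ M *ᵥ c = ∑ i, ∑ j, M i j * c i * c j := by
  simp only [dotProduct, Matrix.mulVec, Finset.mul_sum]
  exact Finset.sum_congr rfl fun i _ => Finset.sum_congr rfl fun j _ => by ring

theorem Matrix.IsSymm.mul_dotProduct_self_le_dotProduct_mulVec {n : Type*} [Fintype n]
    [DecidableEq n] {A : Matrix n n ℝ} (hA : A.IsSymm) {μ : ℝ}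
    (hμ : μ ∈ lowerBounds {r : ℝ | ∃ v : n → ℝ, v ≠ 0 ∧ A *ᵥ v = r • v}) (c : n → ℝ) :
    μ * (c ⬝ᵥ c) ≤ c ⬝ᵥ A *ᵥ c := by
  have hM : (A - μ • 1).IsHermitian := by
    rw [Matrix.IsHermitian, Matrix.conjTranspose_eq_transpose_of_trivial,
      Matrix.transpose_sub, hA, Matrix.transpose_smul, Matrix.transpose_one]
  have heig : ∀ i, 0 ≤ hM.eigenvalues i := by
    intro i
    have hne : ⇑(hM.eigenvectorBasis i) ≠ 0 := fun h0 =>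
      hM.eigenvectorBasis.orthonormal.ne_zero i (by ext j; simpa using congrFun h0 j)
    have hAv : A *ᵥ ⇑(hM.eigenvectorBasis i)
        = (hM.eigenvalues i + μ) • ⇑(hM.eigenvectorBasis i) := by
      have := hM.mulVec_eigenvectorBasis i
      rw [Matrix.sub_mulVec, Matrix.smul_mulVec, Matrix.one_mulVec, sub_eq_iff_eq_add] at this
      rw [this, add_smul]
    linarith [hμ ⟨_, hne, hAv⟩]
  have := (hM.posSemidef_iff_eigenvalues_nonneg.mpr heig).dotProduct_mulVec_nonneg c
  rw [star_trivial, Matrix.sub_mulVec, dotProduct_sub, Matrix.smul_mulVec, Matrix.one_mulVec,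
    dotProduct_smul, smul_eq_mul] at this
  linarith

theorem sq_sum_re_add_sq_sum_I_mul_re_le {ι : Type*} (s : Finset ι) (x : ι → ℝ) (z : ι → ℂ) :
    (∑ i ∈ s, 2 * x i * (z i).re) ^ 2 + (∑ i ∈ s, 2 * x i * (I * z i).re) ^ 2
      ≤ 4 * (∑ i ∈ s, x i ^ 2) * ∑ i ∈ s, normSq (z i) := by
  have hre := Finset.sum_mul_sq_le_sq_mul_sq s x fun i => (z i).re
  have him := Finset.sum_mul_sq_le_sq_mul_sq s x fun i => (z i).im
  simp only [I_mul_re, normSq_apply, Finset.sum_add_distrib, mul_neg, Finset.sum_neg_distrib,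
    mul_assoc, ← Finset.mul_sum, ← sq]
  linarith

theorem sum_re_sq_add_sum_I_mul_re_sq {ι : Type*} (s : Finset ι) (z : ι → ℂ) :
    ∑ i ∈ s, (z i).re ^ 2 + ∑ i ∈ s, (I * z i).re ^ 2 = ∑ i ∈ s, normSq (z i) := by
  simp only [I_mul_re, normSq_apply, sq, neg_mul_neg, Finset.sum_add_distrib]

theorem mul_sum_normSq_add_sum_normSq_pos {ι κ : Type*} [Fintype ι] [Fintype κ]
    {v : (ι → ℂ) × (κ → ℂ)} (hv : v ≠ 0) {c : ℝ} (hc : 0 < c) :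
    0 < c * ∑ i, normSq (v.1 i) + ∑ i, normSq (v.2 i) := by
  have h₁ : 0 ≤ ∑ i, normSq (v.1 i) := Finset.sum_nonneg fun i _ => normSq_nonneg _
  have h₂ : 0 ≤ ∑ i, normSq (v.2 i) := Finset.sum_nonneg fun i _ => normSq_nonneg _
  refine (add_nonneg (mul_nonneg hc.le h₁) h₂).lt_of_ne fun h₀ => hv ?_
  rw [eq_comm, add_eq_zero_iff_of_nonneg (mul_nonneg hc.le h₁) h₂, mul_eq_zero,
    or_iff_right hc.ne', Finset.sum_eq_zero_iff_of_nonneg fun i _ => normSq_nonneg _,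
    Finset.sum_eq_zero_iff_of_nonneg fun i _ => normSq_nonneg _] at h₀
  exact Prod.ext (funext fun i => normSq_eq_zero.1 (h₀.1 i (Finset.mem_univ i)))
    (funext fun i => normSq_eq_zero.1 (h₀.2 i (Finset.mem_univ i)))

section Qfun

variable {k m : ℕ} (A : Matrix (Fin k) (Fin k) ℝ) (B : Matrix (Fin m) (Fin m) ℝ)

theorem contDiff_Qfun : ContDiff ℝ 2 (Qfun A B) := by
  unfold Qfun
  fun_prop

theorem exists_Qfun_add_smul_eq (p d : (Fin k → ℂ) × (Fin m → ℂ)) :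
    ∃ β : ℝ, ∀ t : ℝ, Qfun A B (p + t • d) = Qfun A B p + β * t + Qfun A B d * t ^ 2 := by
  refine ⟨∑ i, ∑ j, A i j * ((p.1 i).im * (d.1 j).im + (d.1 i).im * (p.1 j).im)
    + ∑ i, ∑ j, B i j * ((p.2 i).im * (d.2 j).im + (d.2 i).im * (p.2 j).im)
    + ∑ i, 2 * (p.2 i).re * (d.2 i).re, fun t => ?_⟩
  simp only [Qfun, Prod.fst_add, Prod.snd_add, Prod.smul_fst, Prod.smul_snd, Pi.add_apply,
    Pi.smul_apply, add_im, add_re, real_smul, mul_im, mul_re, ofReal_re, ofReal_im, zero_mul,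
    add_zero, sub_zero, Matrix.sum_sum_mul_add_mul, Finset.sum_add_mul_sq]
  ring

theorem sum_re_sq_add_smul (p d : (Fin k → ℂ) × (Fin m → ℂ)) (t : ℝ) :
    ∑ i, ((p + t • d).1 i).re ^ 2 = ∑ i, (p.1 i).re ^ 2
      + (∑ i, 2 * (p.1 i).re * (d.1 i).re) * t + (∑ i, (d.1 i).re ^ 2) * t ^ 2 := by
  simp only [Prod.fst_add, Prod.smul_fst, Pi.add_apply, Pi.smul_apply, add_re, real_smul,
    mul_re, ofReal_re, ofReal_im, zero_mul, sub_zero, Finset.sum_add_mul_sq]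

variable {A B}

theorem iteratedFDeriv_two_Qfun_sub_comp {h : ℝ → ℝ} (hh : ContDiffOn ℝ 2 h (Ici 0))
    (p d : (Fin k → ℂ) × (Fin m → ℂ)) :
    iteratedFDeriv ℝ 2 (fun ζ => Qfun A B ζ - h (∑ i, (ζ.1 i).re ^ 2)) p ![d, d]
      = 2 * Qfun A B d
        - (derivWithin (derivWithin h (Ici 0)) (Ici 0) (∑ i, (p.1 i).re ^ 2)
            * (∑ i, 2 * (p.1 i).re * (d.1 i).re) ^ 2
          + derivWithin h (Ici 0) (∑ i, (p.1 i).re ^ 2) * (2 * ∑ i, (d.1 i).re ^ 2)) := by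
  have hN : ContDiff ℝ 2 fun ζ : (Fin k → ℂ) × (Fin m → ℂ) => ∑ i, (ζ.1 i).re ^ 2 := by
    fun_prop
  have hN_nonneg : ∀ ζ : (Fin k → ℂ) × (Fin m → ℂ), ∑ i, (ζ.1 i).re ^ 2 ∈ Ici 0 :=
    fun ζ => mem_Ici.2 (Finset.sum_nonneg fun i _ => sq_nonneg _)
  have hhN : ContDiff ℝ 2 fun ζ : (Fin k → ℂ) × (Fin m → ℂ) => h (∑ i, (ζ.1 i).re ^ 2) :=
    hh.comp_contDiff hN hN_nonneg
  obtain ⟨β, hβ⟩ := exists_Qfun_add_smul_eq A B p d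
  rw [show (fun ζ => Qfun A B ζ - h (∑ i, (ζ.1 i).re ^ 2))
      = Qfun A B - fun ζ => h (∑ i, (ζ.1 i).re ^ 2) from rfl,
    iteratedFDeriv_sub_apply (contDiff_Qfun A B).contDiffAt hhN.contDiffAt,
    sub_apply, iteratedFDeriv_two_apply_of_line_eq (contDiff_Qfun A B) hβ,
    iteratedFDeriv_two_comp_apply_of_line_eq hN (uniqueDiffOn_Ici 0) hh hN_nonneg
      (sum_re_sq_add_smul p d)]

theorem le_Qfun_add_Qfun_I_smul (hA : A.IsSymm) {μ : ℝ}
    (hμ : μ ∈ lowerBounds {r : ℝ | ∃ v : Fin k → ℝ, v ≠ 0 ∧ A *ᵥ v = r • v})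
    (hB : B.PosSemidef) (v : (Fin k → ℂ) × (Fin m → ℂ)) :
    μ * ∑ i, normSq (v.1 i) + ∑ i, normSq (v.2 i) ≤ Qfun A B v + Qfun A B (I • v) := by
  have hAre := hA.mul_dotProduct_self_le_dotProduct_mulVec hμ fun i => (v.1 i).re
  have hAim := hA.mul_dotProduct_self_le_dotProduct_mulVec hμ fun i => (v.1 i).im
  have hBre := hB.dotProduct_mulVec_nonneg fun i => (v.2 i).re
  have hBim := hB.dotProduct_mulVec_nonneg fun i => (v.2 i).im
  rw [star_trivial, Matrix.dotProduct_mulVec_self_eq_sum_sum] at hBre hBim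
  rw [Matrix.dotProduct_mulVec_self_eq_sum_sum, dotProduct] at hAre hAim
  simp only [Qfun, normSq_apply, Prod.smul_fst, Prod.smul_snd, Pi.smul_apply, smul_eq_mul,
    I_mul_re, I_mul_im, Finset.sum_add_distrib, sq, neg_mul_neg]
  linarith

end Qfun

theorem stmt_17_general {k m : ℕ}
    (A : Matrix (Fin k) (Fin k) ℝ) (hAsymm : A.IsSymm)
    (B : Matrix (Fin m) (Fin m) ℝ) (hBpd : B.PosDef)
    (lam₁ : ℝ)
    (hlam : IsLeast {r : ℝ | ∃ v : Fin k → ℝ, v ≠ 0 ∧ A.mulVec v = r • v} lam₁)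
    (h : ℝ → ℝ) (hh : ContDiffOn ℝ (⊤ : ℕ∞) h (Ici 0))
    (hconv : ∀ t ∈ Ici (0 : ℝ), 0 ≤ derivWithin (derivWithin h (Ici 0)) (Ici 0) t)
    (hlt2 : ∀ t ∈ Ici (0 : ℝ),
      2 * t * derivWithin (derivWithin h (Ici 0)) (Ici 0) t
        + derivWithin h (Ici 0) t < lam₁) :
    ∀ ζ v : (Fin k → ℂ) × (Fin m → ℂ), v ≠ 0 →
      0 < leviForm (fun ζ => Qfun A B ζ - h (∑ i, (ζ.1 i).re ^ 2)) ζ v := by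
  intro p v hv
  have hh₂ : ContDiffOn ℝ 2 h (Ici 0) := hh.of_le (WithTop.coe_le_coe.2 le_top)
  have ht₀ : ∑ i, (p.1 i).re ^ 2 ∈ Ici 0 := mem_Ici.2 (Finset.sum_nonneg fun i _ => sq_nonneg _)
  rw [leviForm, iteratedFDeriv_two_Qfun_sub_comp hh₂, iteratedFDeriv_two_Qfun_sub_comp hh₂]
  simp only [Prod.smul_fst, Pi.smul_apply, smul_eq_mul]
  have hQ := le_Qfun_add_Qfun_I_smul hAsymm hlam.2 hBpd.posSemidef v
  have hCS := mul_le_mul_of_nonneg_left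
    (sq_sum_re_add_sq_sum_I_mul_re_le Finset.univ (fun i => (p.1 i).re) v.1) (hconv _ ht₀)
  have hS := congrArg (derivWithin h (Ici 0) (∑ i, (p.1 i).re ^ 2) * ·)
    (sum_re_sq_add_sum_I_mul_re_sq Finset.univ v.1)
  have hpos := mul_sum_normSq_add_sum_normSq_pos hv (sub_pos.2 (hlt2 _ ht₀))
  linarith

theorem stmt_17 {k m : ℕ} (hk : 1 ≤ k)
    (A : Matrix (Fin k) (Fin k) ℝ) (hAsymm : A.IsSymm) (hAI : (A - 1).PosDef)
    (B : Matrix (Fin m) (Fin m) ℝ) (hBsymm : B.IsSymm) (hBpd : B.PosDef)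
    (lam₁ : ℝ)
    (hlam : IsLeast {r : ℝ | ∃ v : Fin k → ℝ, v ≠ 0 ∧ A.mulVec v = r • v} lam₁)
    (hlam₁ : 1 < lam₁)
    (h : ℝ → ℝ) (hh : ContDiffOn ℝ (⊤ : ℕ∞) h (Ici 0))
    (hmono : ∀ t ∈ Ici (0 : ℝ), 0 ≤ derivWithin h (Ici 0) t)
    (hconv : ∀ t ∈ Ici (0 : ℝ), 0 ≤ derivWithin (derivWithin h (Ici 0)) (Ici 0) t)
    (hlt : ∀ t ∈ Ici (0 : ℝ), derivWithin h (Ici 0) t < lam₁)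
    (hlt2 : ∀ t ∈ Ici (0 : ℝ),
      2 * t * derivWithin (derivWithin h (Ici 0)) (Ici 0) t
        + derivWithin h (Ici 0) t < lam₁) :
    ∀ ζ v : (Fin k → ℂ) × (Fin m → ℂ), v ≠ 0 →
      0 < leviForm (fun ζ => Qfun A B ζ - h (∑ i, (ζ.1 i).re ^ 2)) ζ v :=
  stmt_17_general A hAsymm B hBpd lam₁ hlam h hh hconv hlt2
end

section
/- In the setting of the preceding handlebody construction (A a k×k real symmetric matrix with A − I positive definite, B real symmetric positive definite, Q(y,w) = ⟨Ay,y⟩ + ⟨Bv,v⟩ + |u|², ρ(z,w) = Q(y,w) − |x|², Λᵏ = {(x+i0,0) : x ∈ ℝᵏ}, and given r, ε > 0 let c₀, R, δ, h, τ be as produced there, so that τ = Q − h(|x|²) is strongly plurisubharmonic, τ = ρ + c₀ for |x|² ≥ R, {ρ ≤ −c₀} ∪ Λᵏ ⊆ {τ ≤ 0} ⊆ {ρ < −r} ∪ {Q < ε}, and 0 is the only critical point of τ): there exists c₁ > 0 such that for every c ∈ (0, c₁), the set K_c = {ζ ∈ ℂⁿ : τ(ζ) ≤ c} and the set E_{c−c₀}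 = {ζ : ρ(ζ) ≤ c − c₀} ∪ Λᵏ satisfy: (a) E_{c−c₀} ⊆ K_c ⊆ {ρ < −r} ∪ {Q < ε}; (b) the boundary bK_c = {τ = c} contains no critical point of τ and L_τ(p;v) > 0 for every p ∈ bK_c and nonzero v ∈ ℂⁿ (so K_c is a smoothly bounded strongly pseudoconvex domain); (c) there is a strong deformation retraction of K_c onto E_{c−c₀}, i.e. a continuous H : [0,1] × K_c → K_c with H(0,·) = id, H(1, K_c) ⊆ E_{c−c₀} and H(t, e) = e for all e ∈ E_{c−c₀} and t ∈ [0,1]. -/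
open Complex Set

/-!
The retraction keeps `x` and shrinks the normal part `(y, w)` of `ζ` by a factor
`s ∈ [σ(ζ), 1]`, where `σ(ζ)²` is `(|x|² + c - c₀) / Q(ζ)` clamped to `[0, 1]`. This multiplies
`Q` by `s² ≤ 1`, so `τ = Q - h(|x|²)` decreases and `K_c` is preserved; at `s = σ` one has
`ρ ≤ c - c₀`, or the point lies on `Λᵏ` when `|x|² + c - c₀ < 0`. Since `Q` is coercive in
`(y, w)`, the shrinking is continuous also at `Λᵏ`, where `σ` is not.

The inclusion `E_{c-c₀} ⊆ K_c` amounts to `t - h(t) ≤ c₀`, read off from `{ρ ≤ -c₀} ⊆ {τ ≤ 0}` at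
a point with `|x|² = t` and `Q = t - c₀`. For `K_c ⊆ {ρ < -r} ∪ {Q < ε}`, far out `τ = ρ + c₀`,
and on the compact remainder `{|x|² ≤ R, τ ≤ c₀ - r, ρ ≥ -r, Q ≥ ε}` the function `τ` is positive,
so it has a positive minimum there; `c₁` is the smaller of that minimum and `c₀ - r`. Finally
`τ(0) ≤ 0 < c`, so the only critical point is not on `{τ = c}`, which is then the frontier of `K_c`.
-/

open Filter Topology Matrix

lemma one_sub_mul_one_sub_mem_Icc {t σ : ℝ} (ht : t ∈ Icc (0 : ℝ) 1) (hσ : σ ∈ Icc (0 : ℝ) 1) :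
    1 - t * (1 - σ) ∈ Icc (0 : ℝ) 1 :=
  ⟨by nlinarith [ht.1, ht.2, hσ.1, hσ.2], by nlinarith [ht.1, hσ.2]⟩

lemma min_one_max_zero_div_mul_le {b q : ℝ} (hb : 0 ≤ b) (hq : 0 ≤ q) :
    min 1 (max 0 (b / q)) * q ≤ b := by
  rcases hq.eq_or_lt with rfl | hq
  · simpa using hb
  · calc min 1 (max 0 (b / q)) * q ≤ b / q * q := by
          gcongr
          exact (min_le_right _ _).trans (max_eq_right (by positivity)).le
      _ = b := div_mul_cancel₀ b hq.ne'

lemma ContinuousOn.smul_of_abs_le_one {X E : Type*} [TopologicalSpace X]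
    [SeminormedAddCommGroup E] [NormedSpace ℝ E] {s : X → ℝ} {v : X → E} {S : Set X}
    (hv : ContinuousOn v S) (hs_le : ∀ x ∈ S, |s x| ≤ 1)
    (hs : ∀ x ∈ S, v x ≠ 0 → ContinuousWithinAt s S x) :
    ContinuousOn (fun x => s x • v x) S := by
  intro x hx
  by_cases hvx : v x = 0
  · rw [ContinuousWithinAt, hvx, smul_zero]
    have hv0 : Tendsto (fun y => ‖v y‖) (𝓝[S] x) (𝓝 0) := by
      simpa [ContinuousWithinAt, hvx] using (hv x hx).norm
    refine squeeze_zero_norm' ?_ hv0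
    filter_upwards [self_mem_nhdsWithin] with y hy
    rw [norm_smul, Real.norm_eq_abs]
    exact mul_le_of_le_one_left (norm_nonneg _) (hs_le y hy)
  · exact (hs x hx hvx).smul (hv x hx)

lemma frontier_setOf_le_eq_of_fderiv_ne_zero {E : Type*} [NormedAddCommGroup E]
    [NormedSpace ℝ E] {f : E → ℝ} (hf : Continuous f) {c : ℝ}
    (hcrit : ∀ p, f p = c → fderiv ℝ f p ≠ 0) : frontier {p | f p ≤ c} = {p | f p = c} := by
  refine (frontier_le_subset_eq hf continuous_const).antisymm fun p hp => ?_
  refine ⟨subset_closure (le_of_eq hp), fun hint => hcrit p hp (IsLocalMax.fderiv_eq_zero ?_)⟩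
  filter_upwards [mem_interior_iff_mem_nhds.1 hint] with q hq
  exact hq.trans hp.ge

section QuadraticForm

variable {ι : Type*} [Fintype ι]

lemma dotProduct_mulVec_eq_sum (M : Matrix ι ι ℝ) (v : ι → ℝ) :
    v ⬝ᵥ M *ᵥ v = ∑ i, ∑ j, M i j * v i * v j := by
  simp only [dotProduct, Matrix.mulVec, Finset.mul_sum]
  exact Finset.sum_congr rfl fun i _ => Finset.sum_congr rfl fun j _ => by ring

lemma sum_sum_mul_const_mul (M : Matrix ι ι ℝ) (v : ι → ℝ) (s : ℝ) :
    ∑ i, ∑ j, M i j * (s * v i) * (s * v j) = s ^ 2 * ∑ i, ∑ j, M i j * v i * v j := by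
  simp only [Finset.mul_sum]
  exact Finset.sum_congr rfl fun i _ => Finset.sum_congr rfl fun j _ => by ring

lemma sq_le_sum_sq (v : ι → ℝ) (i : ι) : v i ^ 2 ≤ ∑ j, v j ^ 2 :=
  Finset.single_le_sum (fun j _ => sq_nonneg (v j)) (Finset.mem_univ i)

lemma sum_sq_le_sum_sum_mul_of_posSemidef_sub_one [DecidableEq ι] {M : Matrix ι ι ℝ}
    (hM : (M - 1).PosSemidef) (v : ι → ℝ) : ∑ i, v i ^ 2 ≤ ∑ i, ∑ j, M i j * v i * v j := by
  have := hM.dotProduct_mulVec_nonneg v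
  rw [star_trivial, sub_mulVec, one_mulVec, dotProduct_sub, dotProduct_mulVec_eq_sum] at this
  simpa [dotProduct, sq] using this

lemma Matrix.PosDef.exists_pos_mul_sq_norm_le {M : Matrix ι ι ℝ} (hM : M.PosDef) :
    ∃ β > 0, ∀ v : ι → ℝ, β * ‖v‖ ^ 2 ≤ v ⬝ᵥ M *ᵥ v := by
  rcases isEmpty_or_nonempty ι with hι | hι
  · exact ⟨1, one_pos, fun v => by simp [Subsingleton.elim v 0]⟩
  have hq : Continuous fun v : ι → ℝ => v ⬝ᵥ M *ᵥ v := by fun_prop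
  obtain ⟨v₀, hv₀, hmin⟩ := (isCompact_sphere (0 : ι → ℝ) 1).exists_isMinOn
    (NormedSpace.sphere_nonempty.2 zero_le_one) hq.continuousOn
  have hv₀ne : v₀ ≠ 0 := ne_zero_of_mem_unit_sphere ⟨v₀, hv₀⟩
  refine ⟨v₀ ⬝ᵥ M *ᵥ v₀, by simpa using hM.dotProduct_mulVec_pos hv₀ne, fun v => ?_⟩
  rcases eq_or_ne v 0 with rfl | hv
  · simp
  have hnv : 0 < ‖v‖ := norm_pos_iff.2 hv
  have hunit : ‖v‖⁻¹ • v ∈ Metric.sphere (0 : ι → ℝ) 1 := by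
    simp [norm_smul, hnv.ne']
  have := isMinOn_iff.1 hmin _ hunit
  simp only [Matrix.mulVec_smul, dotProduct_smul, smul_dotProduct, smul_eq_mul] at this
  calc v₀ ⬝ᵥ M *ᵥ v₀ * ‖v‖ ^ 2 ≤ ‖v‖⁻¹ * (‖v‖⁻¹ * (v ⬝ᵥ M *ᵥ v)) * ‖v‖ ^ 2 := by gcongr
    _ = v ⬝ᵥ M *ᵥ v := by field_simp

end QuadraticForm

section Handlebody

variable {k m : ℕ}

def xNormSq (ζ : (Fin k → ℂ) × (Fin m → ℂ)) : ℝ := ∑ i, (ζ.1 i).re ^ 2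

def totallyRealPlane : Set ((Fin k → ℂ) × (Fin m → ℂ)) :=
  {ζ | (∀ i, (ζ.1 i).im = 0) ∧ ζ.2 = 0}

noncomputable def realProj (ζ : (Fin k → ℂ) × (Fin m → ℂ)) : (Fin k → ℂ) × (Fin m → ℂ) :=
  (fun i => ((ζ.1 i).re : ℂ), 0)

noncomputable def scaleNormal (s : ℝ) (ζ : (Fin k → ℂ) × (Fin m → ℂ)) :
    (Fin k → ℂ) × (Fin m → ℂ) :=
  realProj ζ + s • (ζ - realProj ζ)

lemma zero_mem_totallyRealPlane : (0 : (Fin k → ℂ) × (Fin m → ℂ)) ∈ totallyRealPlane :=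
  ⟨fun _ => rfl, rfl⟩

lemma xNormSq_nonneg (ζ : (Fin k → ℂ) × (Fin m → ℂ)) : 0 ≤ xNormSq ζ :=
  Finset.sum_nonneg fun _ _ => sq_nonneg _

lemma continuous_xNormSq : Continuous (xNormSq (k := k) (m := m)) := by
  unfold xNormSq; fun_prop

lemma continuous_realProj : Continuous (realProj (k := k) (m := m)) := by
  unfold realProj; fun_prop

lemma realProj_eq_self_iff {ζ : (Fin k → ℂ) × (Fin m → ℂ)} :
    realProj ζ = ζ ↔ ζ ∈ totallyRealPlane := by
  simp [realProj, totallyRealPlane, Prod.ext_iff, funext_iff, Complex.ext_iff, eq_comm]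

lemma norm_realProj_le (ζ : (Fin k → ℂ) × (Fin m → ℂ)) : ‖realProj ζ‖ ≤ √(xNormSq ζ) := by
  refine norm_prod_le_iff.2 ⟨(pi_norm_le_iff_of_nonneg (Real.sqrt_nonneg _)).2 fun i => ?_,
    by simp [realProj]⟩
  show ‖((ζ.1 i).re : ℂ)‖ ≤ _
  rw [Complex.norm_real, Real.norm_eq_abs]
  exact Real.abs_le_sqrt (sq_le_sum_sq (fun j => (ζ.1 j).re) i)

lemma xNormSq_scaleNormal (s : ℝ) (ζ : (Fin k → ℂ) × (Fin m → ℂ)) :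
    xNormSq (scaleNormal s ζ) = xNormSq ζ := by
  simp [xNormSq, scaleNormal, realProj]

lemma scaleNormal_one (ζ : (Fin k → ℂ) × (Fin m → ℂ)) : scaleNormal 1 ζ = ζ := by
  simp [scaleNormal]

lemma scaleNormal_of_mem {ζ : (Fin k → ℂ) × (Fin m → ℂ)} (hζ : ζ ∈ totallyRealPlane) (s : ℝ) :
    scaleNormal s ζ = ζ := by
  simp [scaleNormal, realProj_eq_self_iff.2 hζ]

lemma scaleNormal_zero_mem (ζ : (Fin k → ℂ) × (Fin m → ℂ)) :
    scaleNormal 0 ζ ∈ totallyRealPlane := by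
  simp [scaleNormal, realProj, totallyRealPlane]

variable (A : Matrix (Fin k) (Fin k) ℝ) (B : Matrix (Fin m) (Fin m) ℝ)

lemma continuous_Qfun : Continuous (Qfun A B) := by
  unfold Qfun; fun_prop

lemma Qfun_eq_zero_of_mem {ζ : (Fin k → ℂ) × (Fin m → ℂ)} (hζ : ζ ∈ totallyRealPlane) :
    Qfun A B ζ = 0 := by
  simp [Qfun, hζ.1, hζ.2]

lemma Qfun_scaleNormal (s : ℝ) (ζ : (Fin k → ℂ) × (Fin m → ℂ)) :
    Qfun A B (scaleNormal s ζ) = s ^ 2 * Qfun A B ζ := by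
  simp only [Qfun, scaleNormal, realProj, Prod.fst_add, Prod.snd_add, Prod.smul_fst,
    Prod.smul_snd, Prod.fst_sub, Prod.snd_sub, Pi.add_apply, Pi.smul_apply, Pi.sub_apply,
    Pi.zero_apply, Complex.add_im, Complex.ofReal_im, Complex.smul_im, Complex.smul_re,
    smul_eq_mul, Complex.sub_im, zero_add, sub_zero]
  rw [sum_sum_mul_const_mul, sum_sum_mul_const_mul]
  simp only [mul_pow, ← Finset.mul_sum]
  ring

lemma exists_xNormSq_eq_Qfun_eq {i₀ : Fin k} (hA : 0 < A i₀ i₀) {s q : ℝ} (hs : 0 ≤ s)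
    (hq : 0 ≤ q) : ∃ ζ : (Fin k → ℂ) × (Fin m → ℂ), xNormSq ζ = s ∧ Qfun A B ζ = q := by
  refine ⟨(fun i => ⟨Pi.single (M := fun _ => ℝ) i₀ √s i,
    Pi.single (M := fun _ => ℝ) i₀ √(q / A i₀ i₀) i⟩, 0), ?_, ?_⟩
  · simp [xNormSq, Pi.single_apply, ite_pow, Real.sq_sqrt hs]
  · simp only [Qfun, Pi.single_apply, mul_ite, mul_zero, ite_mul, zero_mul, Finset.sum_ite_eq',
      Finset.mem_univ, ↓reduceIte, Pi.zero_apply, zero_im, Finset.sum_const_zero, add_zero,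
      zero_re, ne_eq, OfNat.ofNat_ne_zero, not_false_eq_true, zero_pow]
    rw [mul_assoc, Real.mul_self_sqrt (div_nonneg hq hA.le), mul_div_cancel₀ q hA.ne']

def handlebodyCenter (a : ℝ) : Set ((Fin k → ℂ) × (Fin m → ℂ)) :=
  {ζ | Qfun A B ζ - xNormSq ζ ≤ a} ∪ totallyRealPlane

/-- The factor by which the normal part of `ζ` must be shrunk to land in `{ρ ≤ a}` (capped at
`1`). Where `Q ζ = 0` the division gives `0`; then `ζ ∈ Λᵏ` and the factor is irrelevant. -/
noncomputable def retractionFactor (a : ℝ) (ζ : (Fin k → ℂ) × (Fin m → ℂ)) : ℝ :=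
  √(min 1 (max 0 ((xNormSq ζ + a) / Qfun A B ζ)))

noncomputable def deformation (a : ℝ) (p : ℝ × ((Fin k → ℂ) × (Fin m → ℂ))) :
    (Fin k → ℂ) × (Fin m → ℂ) :=
  scaleNormal (1 - p.1 * (1 - retractionFactor A B a p.2)) p.2

lemma retractionFactor_mem_Icc (a : ℝ) (ζ : (Fin k → ℂ) × (Fin m → ℂ)) :
    retractionFactor A B a ζ ∈ Icc (0 : ℝ) 1 :=
  ⟨Real.sqrt_nonneg _, Real.sqrt_le_one.2 (min_le_left _ _)⟩

lemma xNormSq_deformation (a : ℝ) (p : ℝ × ((Fin k → ℂ) × (Fin m → ℂ))) :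
    xNormSq (deformation A B a p) = xNormSq p.2 :=
  xNormSq_scaleNormal _ _

lemma deformation_zero (a : ℝ) (ζ : (Fin k → ℂ) × (Fin m → ℂ)) :
    deformation A B a (0, ζ) = ζ := by
  simp [deformation, scaleNormal_one]

variable {A B}

lemma continuousAt_retractionFactor (a : ℝ) {ζ : (Fin k → ℂ) × (Fin m → ℂ)}
    (hζ : Qfun A B ζ ≠ 0) : ContinuousAt (retractionFactor A B a) ζ :=
  Real.continuous_sqrt.continuousAt.comp (continuousAt_const.min (continuousAt_const.max
    ((continuous_xNormSq.add continuous_const).continuousAt.div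
      (continuous_Qfun A B).continuousAt hζ)))

lemma Qfun_nonneg (hA : (A - 1).PosDef) (hB : B.PosDef) (ζ : (Fin k → ℂ) × (Fin m → ℂ)) :
    0 ≤ Qfun A B ζ := by
  have hy := sum_sq_le_sum_sum_mul_of_posSemidef_sub_one hA.posSemidef fun i => (ζ.1 i).im
  have hv := hB.posSemidef.dotProduct_mulVec_nonneg fun i => (ζ.2 i).im
  rw [star_trivial, dotProduct_mulVec_eq_sum] at hv
  have hy0 : 0 ≤ ∑ i, (ζ.1 i).im ^ 2 := Finset.sum_nonneg fun _ _ => sq_nonneg _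
  have hu0 : 0 ≤ ∑ i, (ζ.2 i).re ^ 2 := Finset.sum_nonneg fun _ _ => sq_nonneg _
  unfold Qfun
  linarith

lemma exists_pos_forall_mul_sq_le_Qfun (hA : (A - 1).PosDef) (hB : B.PosDef) :
    ∃ β > 0, ∀ ζ : (Fin k → ℂ) × (Fin m → ℂ),
      (∀ i, β * (ζ.1 i).im ^ 2 ≤ Qfun A B ζ) ∧ ∀ i, β * ‖ζ.2 i‖ ^ 2 ≤ Qfun A B ζ := by
  obtain ⟨βB, hβB, hBβ⟩ := hB.exists_pos_mul_sq_norm_le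
  refine ⟨min βB 1, lt_min hβB one_pos, fun ζ => ?_⟩
  set y : Fin k → ℝ := fun i => (ζ.1 i).im
  set u : Fin m → ℝ := fun i => (ζ.2 i).re
  set v : Fin m → ℝ := fun i => (ζ.2 i).im
  have hQ : Qfun A B ζ = ∑ i, ∑ j, A i j * y i * y j + v ⬝ᵥ B *ᵥ v + ∑ i, u i ^ 2 := by
    rw [dotProduct_mulVec_eq_sum]; rfl
  have hAy := sum_sq_le_sum_sum_mul_of_posSemidef_sub_one hA.posSemidef y
  have hBv : min βB 1 * ‖v‖ ^ 2 ≤ v ⬝ᵥ B *ᵥ v :=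
    (mul_le_mul_of_nonneg_right (min_le_left _ _) (sq_nonneg _)).trans (hBβ v)
  have hβ0 : 0 ≤ min βB 1 := le_min hβB.le zero_le_one
  have hβ1 : min βB 1 ≤ 1 := min_le_right _ _
  have hu0 : 0 ≤ ∑ i, u i ^ 2 := Finset.sum_nonneg fun i _ => sq_nonneg (u i)
  have hy0 : 0 ≤ ∑ i, y i ^ 2 := Finset.sum_nonneg fun i _ => sq_nonneg (y i)
  refine ⟨fun i => show min βB 1 * y i ^ 2 ≤ _ by nlinarith [sq_le_sum_sq y i, sq_nonneg ‖v‖],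
    fun i => ?_⟩
  have hvi : v i ^ 2 ≤ ‖v‖ ^ 2 := by
    simpa [Real.norm_eq_abs, sq_abs] using pow_le_pow_left₀ (norm_nonneg _) (norm_le_pi_norm v i) 2
  rw [Complex.sq_norm, Complex.normSq_apply, ← sq, ← sq]
  change min βB 1 * (u i ^ 2 + v i ^ 2) ≤ _
  nlinarith [sq_le_sum_sq u i]

lemma exists_pos_mul_sq_norm_sub_realProj_le (hA : (A - 1).PosDef) (hB : B.PosDef) :
    ∃ β > 0, ∀ ζ, β * ‖ζ - realProj ζ‖ ^ 2 ≤ Qfun A B ζ := by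
  obtain ⟨β, hβ, hQ⟩ := exists_pos_forall_mul_sq_le_Qfun hA hB
  refine ⟨β, hβ, fun ζ => ?_⟩
  have hnormal : ‖ζ - realProj ζ‖ ≤ √(Qfun A B ζ / β) := by
    refine norm_prod_le_iff.2 ⟨(pi_norm_le_iff_of_nonneg (Real.sqrt_nonneg _)).2 fun i => ?_,
      (pi_norm_le_iff_of_nonneg (Real.sqrt_nonneg _)).2 fun i => ?_⟩ <;>
      refine Real.le_sqrt_of_sq_le ((le_div_iff₀ hβ).2 ?_) <;> rw [mul_comm]
    · rw [Complex.sq_norm, Complex.normSq_apply]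
      simpa [realProj, sq] using (hQ ζ).1 i
    · simpa [realProj] using (hQ ζ).2 i
  calc β * ‖ζ - realProj ζ‖ ^ 2 ≤ β * √(Qfun A B ζ / β) ^ 2 := by gcongr
    _ = Qfun A B ζ := by
      rw [Real.sq_sqrt (div_nonneg (Qfun_nonneg hA hB ζ) hβ.le)]; field_simp

lemma mem_totallyRealPlane_of_Qfun_eq_zero (hA : (A - 1).PosDef) (hB : B.PosDef)
    {ζ : (Fin k → ℂ) × (Fin m → ℂ)} (hζ : Qfun A B ζ = 0) : ζ ∈ totallyRealPlane := by
  obtain ⟨β, hβ, hQ⟩ := exists_pos_mul_sq_norm_sub_realProj_le hA hB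
  have hsq : ‖ζ - realProj ζ‖ ^ 2 ≤ 0 := le_of_mul_le_mul_left (by simpa [hζ] using hQ ζ) hβ
  have : ζ - realProj ζ = 0 := by simpa using hsq
  exact realProj_eq_self_iff.1 (sub_eq_zero.1 this).symm

lemma isBounded_setOf_xNormSq_le_Qfun_le (hA : (A - 1).PosDef) (hB : B.PosDef) (R C : ℝ) :
    Bornology.IsBounded {ζ : (Fin k → ℂ) × (Fin m → ℂ) | xNormSq ζ ≤ R ∧ Qfun A B ζ ≤ C} := by
  obtain ⟨β, hβ, hQ⟩ := exists_pos_mul_sq_norm_sub_realProj_le hA hB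
  refine isBounded_iff_forall_norm_le.2 ⟨√R + √(C / β), fun ζ ⟨hR, hC⟩ => ?_⟩
  have hnormal : ‖ζ - realProj ζ‖ ≤ √(C / β) :=
    Real.le_sqrt_of_sq_le ((le_div_iff₀ hβ).2 (by linarith [hQ ζ]))
  calc ‖ζ‖ = ‖realProj ζ + (ζ - realProj ζ)‖ := by rw [add_sub_cancel]
    _ ≤ ‖realProj ζ‖ + ‖ζ - realProj ζ‖ := norm_add_le _ _
    _ ≤ √R + √(C / β) := add_le_add ((norm_realProj_le ζ).trans (Real.sqrt_le_sqrt hR)) hnormal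

lemma continuousOn_deformation (hA : (A - 1).PosDef) (hB : B.PosDef) (a : ℝ) :
    ContinuousOn (deformation A B a) (Icc 0 1 ×ˢ univ) := by
  have hproj : Continuous fun p : ℝ × ((Fin k → ℂ) × (Fin m → ℂ)) => realProj p.2 :=
    continuous_realProj.comp continuous_snd
  refine hproj.continuousOn.add (ContinuousOn.smul_of_abs_le_one
    (continuous_snd.sub hproj).continuousOn (fun p hp => ?_) fun p _ hp => ?_)
  · have := one_sub_mul_one_sub_mem_Icc hp.1 (retractionFactor_mem_Icc A B a p.2)
    exact abs_le.2 ⟨by linarith [this.1], this.2⟩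
  · have hQ : Qfun A B p.2 ≠ 0 := fun h0 => hp (sub_eq_zero.2
      (realProj_eq_self_iff.2 (mem_totallyRealPlane_of_Qfun_eq_zero hA hB h0)).symm)
    exact (continuousAt_const.sub (continuousAt_fst.mul (continuousAt_const.sub
      ((continuousAt_retractionFactor a hQ).comp continuousAt_snd)))).continuousWithinAt

lemma Qfun_deformation_le (hA : (A - 1).PosDef) (hB : B.PosDef) (a : ℝ) {t : ℝ}
    (ht : t ∈ Icc (0 : ℝ) 1) (ζ : (Fin k → ℂ) × (Fin m → ℂ)) :
    Qfun A B (deformation A B a (t, ζ)) ≤ Qfun A B ζ := by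
  have hs := one_sub_mul_one_sub_mem_Icc ht (retractionFactor_mem_Icc A B a ζ)
  rw [deformation, Qfun_scaleNormal]
  exact mul_le_of_le_one_left (Qfun_nonneg hA hB ζ) (pow_le_one₀ hs.1 hs.2)

lemma deformation_mem_sublevel (hA : (A - 1).PosDef) (hB : B.PosDef) {h : ℝ → ℝ} {a c t : ℝ}
    (ht : t ∈ Icc (0 : ℝ) 1) {ζ : (Fin k → ℂ) × (Fin m → ℂ)}
    (hζ : Qfun A B ζ - h (xNormSq ζ) ≤ c) :
    Qfun A B (deformation A B a (t, ζ)) - h (xNormSq (deformation A B a (t, ζ))) ≤ c := by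
  rw [xNormSq_deformation]
  linarith [Qfun_deformation_le hA hB a ht ζ]

lemma deformation_one_mem (hA : (A - 1).PosDef) (hB : B.PosDef) (a : ℝ)
    (ζ : (Fin k → ℂ) × (Fin m → ℂ)) : deformation A B a (1, ζ) ∈ handlebodyCenter A B a := by
  have hQ := Qfun_nonneg hA hB ζ
  have hζ : deformation A B a (1, ζ) = scaleNormal (retractionFactor A B a ζ) ζ := by
    simp [deformation]
  rcases lt_or_ge (xNormSq ζ + a) 0 with hneg | hnonneg
  · right
    have hσ : retractionFactor A B a ζ = 0 := by
      simp [retractionFactor, div_nonpos_of_nonpos_of_nonneg hneg.le hQ]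
    rw [hζ, hσ]
    exact scaleNormal_zero_mem ζ
  · left
    have hσ : retractionFactor A B a ζ ^ 2 * Qfun A B ζ ≤ xNormSq ζ + a := by
      rw [retractionFactor, Real.sq_sqrt (le_min zero_le_one (le_max_left _ _))]
      exact min_one_max_zero_div_mul_le hnonneg hQ
    change Qfun A B _ - xNormSq _ ≤ a
    rw [hζ, Qfun_scaleNormal, xNormSq_scaleNormal]
    linarith

lemma deformation_of_mem (hA : (A - 1).PosDef) (hB : B.PosDef) {a : ℝ}
    {e : (Fin k → ℂ) × (Fin m → ℂ)} (he : e ∈ handlebodyCenter A B a) (t : ℝ) :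
    deformation A B a (t, e) = e := by
  rcases he with hρ | hΛ
  · rcases (Qfun_nonneg hA hB e).eq_or_lt with hQ | hQ
    · exact scaleNormal_of_mem (mem_totallyRealPlane_of_Qfun_eq_zero hA hB hQ.symm) _
    · have hσ : retractionFactor A B a e = 1 := by
        have : 1 ≤ (xNormSq e + a) / Qfun A B e := (one_le_div hQ).2 (by linarith [hρ.out])
        simp [retractionFactor, min_eq_left this, max_eq_right (zero_le_one.trans this)]
      simp [deformation, hσ, scaleNormal_one]
  · exact scaleNormal_of_mem hΛ _

lemma continuous_Qfun_sub_comp_xNormSq {h : ℝ → ℝ} (hh : ContinuousOn h (Ici 0)) :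
    Continuous fun ζ : (Fin k → ℂ) × (Fin m → ℂ) => Qfun A B ζ - h (xNormSq ζ) :=
  (continuous_Qfun A B).sub (hh.comp_continuous continuous_xNormSq xNormSq_nonneg)

lemma sub_le_of_sublevel_subset {i₀ : Fin k} (hA : (A - 1).PosDef) {h : ℝ → ℝ} {c₀ : ℝ}
    (hh : ∀ t ∈ Ici (0 : ℝ), 0 ≤ h t)
    (hsub : {ζ | Qfun A B ζ - xNormSq ζ ≤ -c₀} ⊆ {ζ | Qfun A B ζ - h (xNormSq ζ) ≤ 0})
    {s : ℝ} (hs : 0 ≤ s) : s - h s ≤ c₀ := by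
  rcases lt_or_ge s c₀ with hlt | hge
  · linarith [hh s hs]
  have hAi₀ : 0 < A i₀ i₀ := by
    have := hA.diag_pos (i := i₀)
    rw [Matrix.sub_apply, Matrix.one_apply_eq] at this
    linarith
  obtain ⟨ζ, hx, hQ⟩ := exists_xNormSq_eq_Qfun_eq A B hAi₀ hs (sub_nonneg.2 hge)
  have : Qfun A B ζ - h (xNormSq ζ) ≤ 0 := hsub (show Qfun A B ζ - xNormSq ζ ≤ -c₀ by linarith)
  rw [hx, hQ] at this
  linarith

lemma handlebodyCenter_subset_sublevel {h : ℝ → ℝ} {c₀ c : ℝ} (hc : 0 ≤ c)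
    (hh : ∀ t ∈ Ici (0 : ℝ), 0 ≤ h t) (hh_le : ∀ s, 0 ≤ s → s - h s ≤ c₀) :
    handlebodyCenter A B (c - c₀) ⊆ {ζ | Qfun A B ζ - h (xNormSq ζ) ≤ c} := by
  rintro ζ (hρ | hΛ)
  all_goals show Qfun A B ζ - h (xNormSq ζ) ≤ c
  · linarith [hρ.out, hh_le _ (xNormSq_nonneg ζ)]
  · linarith [Qfun_eq_zero_of_mem A B hΛ, hh _ (xNormSq_nonneg ζ)]

lemma exists_pos_sublevel_subset (hA : (A - 1).PosDef) (hB : B.PosDef) {h : ℝ → ℝ}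
    (hh : ContinuousOn h (Ici 0)) {r ε c₀ R : ℝ} (hrc₀ : r < c₀)
    (hfar : ∀ ζ, R ≤ xNormSq ζ → Qfun A B ζ - h (xNormSq ζ) = Qfun A B ζ - xNormSq ζ + c₀)
    (hzero : {ζ | Qfun A B ζ - h (xNormSq ζ) ≤ 0} ⊆
      {ζ | Qfun A B ζ - xNormSq ζ < -r} ∪ {ζ | Qfun A B ζ < ε}) :
    ∃ c₁ > 0, ∀ c < c₁, {ζ | Qfun A B ζ - h (xNormSq ζ) ≤ c} ⊆
      {ζ | Qfun A B ζ - xNormSq ζ < -r} ∪ {ζ | Qfun A B ζ < ε} := by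
  have hτ := continuous_Qfun_sub_comp_xNormSq (A := A) (B := B) hh
  obtain ⟨M, hM⟩ := isCompact_Icc.bddAbove_image (hh.mono (Icc_subset_Ici_self : Icc 0 R ⊆ _))
  set T := {ζ | xNormSq ζ ≤ R ∧ Qfun A B ζ - h (xNormSq ζ) ≤ c₀ - r ∧
    -r ≤ Qfun A B ζ - xNormSq ζ ∧ ε ≤ Qfun A B ζ}
  have hT : IsCompact T := by
    refine Metric.isCompact_of_isClosed_isBounded ?_
      ((isBounded_setOf_xNormSq_le_Qfun_le hA hB R (c₀ - r + M)).subset fun ζ hζ => ⟨hζ.1, ?_⟩)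
    · exact (isClosed_le continuous_xNormSq continuous_const).inter
        ((isClosed_le hτ continuous_const).inter
        ((isClosed_le continuous_const ((continuous_Qfun A B).sub continuous_xNormSq)).inter
        (isClosed_le continuous_const (continuous_Qfun A B))))
    · linarith [hζ.2.1, hM ⟨xNormSq ζ, ⟨xNormSq_nonneg ζ, hζ.1⟩, rfl⟩]
  have hpos : ∀ ζ ∈ T, 0 < Qfun A B ζ - h (xNormSq ζ) := fun ζ hζ => by
    by_contra hle
    rcases hzero (not_lt.1 hle) with hρ | hQ
    · exact absurd hζ.2.2.1 (not_le.2 hρ)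
    · exact absurd hζ.2.2.2 (not_le.2 hQ)
  obtain ⟨c', hc'pos, hc'⟩ := hT.exists_forall_le' hτ.continuousOn hpos
  refine ⟨min c' (c₀ - r), lt_min hc'pos (sub_pos.2 hrc₀), fun c hc ζ hζ => ?_⟩
  by_contra hout
  have hρ : -r ≤ Qfun A B ζ - xNormSq ζ := not_lt.1 fun h => hout (Or.inl h)
  have hQ : ε ≤ Qfun A B ζ := not_lt.1 fun h => hout (Or.inr h)
  have hζc : Qfun A B ζ - h (xNormSq ζ) ≤ c := hζ
  rcases le_or_gt R (xNormSq ζ) with hR | hR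
  · linarith [hfar ζ hR, min_le_right c' (c₀ - r)]
  · linarith [hc' ζ ⟨hR.le, by linarith [min_le_right c' (c₀ - r)], hρ, hQ⟩,
      min_le_left c' (c₀ - r)]

end Handlebody

theorem stmt_19_general {k m : ℕ} (hk : 1 ≤ k)
    (A : Matrix (Fin k) (Fin k) ℝ) (hAI : (A - 1).PosDef)
    (B : Matrix (Fin m) (Fin m) ℝ) (hBpd : B.PosDef)
    (r ε : ℝ)
    (c₀ R : ℝ) (hrc₀ : r < c₀)
    (h : ℝ → ℝ)
    -- `h, τ` are as produced by the handlebody construction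
    (hh : ContDiffOn ℝ (⊤ : ℕ∞) h (Ici 0))
    (hhpos : ∀ t ∈ Ici (0 : ℝ), 0 ≤ h t)
    -- `τ = Q - h(|x|²)` is strongly plurisubharmonic
    (hpsh : ∀ ζ v : (Fin k → ℂ) × (Fin m → ℂ), v ≠ 0 →
      0 < leviForm (fun ζ => Qfun A B ζ - h (∑ i, (ζ.1 i).re ^ 2)) ζ v)
    -- `τ = Q - δ|x|²` for `|x|² ≤ r`,  `τ = ρ + c₀` for `|x|² ≥ R`
    (hii : ∀ ζ : (Fin k → ℂ) × (Fin m → ℂ), R ≤ (∑ i, (ζ.1 i).re ^ 2) →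
      Qfun A B ζ - h (∑ i, (ζ.1 i).re ^ 2) =
        (Qfun A B ζ - ∑ i, (ζ.1 i).re ^ 2) + c₀)
    -- `{ρ ≤ -c₀} ∪ Λᵏ ⊆ {τ ≤ 0} ⊆ {ρ < -r} ∪ {Q < ε}`
    (hiii₁ : ({ζ : (Fin k → ℂ) × (Fin m → ℂ) |
          Qfun A B ζ - (∑ i, (ζ.1 i).re ^ 2) ≤ -c₀} ∪
        {ζ : (Fin k → ℂ) × (Fin m → ℂ) | (∀ i, (ζ.1 i).im = 0) ∧ ζ.2 = 0}) ⊆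
      {ζ : (Fin k → ℂ) × (Fin m → ℂ) | Qfun A B ζ - h (∑ i, (ζ.1 i).re ^ 2) ≤ 0})
    (hiii₂ : {ζ : (Fin k → ℂ) × (Fin m → ℂ) |
        Qfun A B ζ - h (∑ i, (ζ.1 i).re ^ 2) ≤ 0} ⊆
      ({ζ : (Fin k → ℂ) × (Fin m → ℂ) |
          Qfun A B ζ - (∑ i, (ζ.1 i).re ^ 2) < -r} ∪
        {ζ : (Fin k → ℂ) × (Fin m → ℂ) | Qfun A B ζ < ε}))
    -- the origin is the only critical point of `τ`
    (hcrit : ∀ ζ : (Fin k → ℂ) × (Fin m → ℂ),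
      fderiv ℝ (fun ζ => Qfun A B ζ - h (∑ i, (ζ.1 i).re ^ 2)) ζ = 0 ↔ ζ = 0) :
    ∃ c₁ > (0 : ℝ), ∀ c : ℝ, 0 < c → c < c₁ →
      -- (a) `E_{c-c₀} ⊆ K_c ⊆ {ρ < -r} ∪ {Q < ε}`
      (({ζ : (Fin k → ℂ) × (Fin m → ℂ) |
            Qfun A B ζ - (∑ i, (ζ.1 i).re ^ 2) ≤ c - c₀} ∪
          {ζ : (Fin k → ℂ) × (Fin m → ℂ) | (∀ i, (ζ.1 i).im = 0) ∧ ζ.2 = 0}) ⊆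
        {ζ : (Fin k → ℂ) × (Fin m → ℂ) |
          Qfun A B ζ - h (∑ i, (ζ.1 i).re ^ 2) ≤ c}) ∧
      ({ζ : (Fin k → ℂ) × (Fin m → ℂ) |
          Qfun A B ζ - h (∑ i, (ζ.1 i).re ^ 2) ≤ c} ⊆
        ({ζ : (Fin k → ℂ) × (Fin m → ℂ) |
            Qfun A B ζ - (∑ i, (ζ.1 i).re ^ 2) < -r} ∪
          {ζ : (Fin k → ℂ) × (Fin m → ℂ) | Qfun A B ζ < ε})) ∧
      -- (b) the boundary `bK_c = {τ = c}` contains no critical point of `τ`,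
      -- and the Levi form of `τ` is positive there
      (frontier {ζ : (Fin k → ℂ) × (Fin m → ℂ) |
          Qfun A B ζ - h (∑ i, (ζ.1 i).re ^ 2) ≤ c} =
        {ζ : (Fin k → ℂ) × (Fin m → ℂ) |
          Qfun A B ζ - h (∑ i, (ζ.1 i).re ^ 2) = c}) ∧
      (∀ p : (Fin k → ℂ) × (Fin m → ℂ),
        Qfun A B p - h (∑ i, (p.1 i).re ^ 2) = c →
        fderiv ℝ (fun ζ => Qfun A B ζ - h (∑ i, (ζ.1 i).re ^ 2)) p ≠ 0 ∧
        ∀ v : (Fin k → ℂ) × (Fin m → ℂ), v ≠ 0 →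
          0 < leviForm (fun ζ => Qfun A B ζ - h (∑ i, (ζ.1 i).re ^ 2)) p v) ∧
      -- (c) a strong deformation retraction of `K_c` onto `E_{c-c₀}`
      (∃ H : ℝ × ((Fin k → ℂ) × (Fin m → ℂ)) → (Fin k → ℂ) × (Fin m → ℂ),
        ContinuousOn H ((Icc (0 : ℝ) 1) ×ˢ
          {ζ : (Fin k → ℂ) × (Fin m → ℂ) |
            Qfun A B ζ - h (∑ i, (ζ.1 i).re ^ 2) ≤ c}) ∧
        (∀ t ∈ Icc (0 : ℝ) 1, ∀ ζ : (Fin k → ℂ) × (Fin m → ℂ),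
          Qfun A B ζ - h (∑ i, (ζ.1 i).re ^ 2) ≤ c →
          Qfun A B (H (t, ζ)) - h (∑ i, ((H (t, ζ)).1 i).re ^ 2) ≤ c) ∧
        (∀ ζ : (Fin k → ℂ) × (Fin m → ℂ),
          Qfun A B ζ - h (∑ i, (ζ.1 i).re ^ 2) ≤ c → H (0, ζ) = ζ) ∧
        (∀ ζ : (Fin k → ℂ) × (Fin m → ℂ),
          Qfun A B ζ - h (∑ i, (ζ.1 i).re ^ 2) ≤ c →
          H (1, ζ) ∈
            ({ζ : (Fin k → ℂ) × (Fin m → ℂ) |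
                Qfun A B ζ - (∑ i, (ζ.1 i).re ^ 2) ≤ c - c₀} ∪
              {ζ : (Fin k → ℂ) × (Fin m → ℂ) | (∀ i, (ζ.1 i).im = 0) ∧ ζ.2 = 0})) ∧
        (∀ t ∈ Icc (0 : ℝ) 1, ∀ e ∈
            ({ζ : (Fin k → ℂ) × (Fin m → ℂ) |
                Qfun A B ζ - (∑ i, (ζ.1 i).re ^ 2) ≤ c - c₀} ∪
              {ζ : (Fin k → ℂ) × (Fin m → ℂ) | (∀ i, (ζ.1 i).im = 0) ∧ ζ.2 = 0}),
          H (t, e) = e)) := by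
  have hτ := continuous_Qfun_sub_comp_xNormSq (A := A) (B := B) hh.continuousOn
  have hh_le : ∀ s, 0 ≤ s → s - h s ≤ c₀ := fun s hs =>
    sub_le_of_sublevel_subset (i₀ := ⟨0, hk⟩) hAI hhpos (subset_union_left.trans hiii₁) hs
  obtain ⟨c₁, hc₁, hsub⟩ := exists_pos_sublevel_subset hAI hBpd hh.continuousOn hrc₀ hii hiii₂
  refine ⟨c₁, hc₁, fun c hc hcc₁ => ?_⟩
  have hnocrit : ∀ p, Qfun A B p - h (xNormSq p) = c →
      fderiv ℝ (fun ζ => Qfun A B ζ - h (xNormSq ζ)) p ≠ 0 := fun p hp hp0 => by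
    have hp' : p ∈ totallyRealPlane := (hcrit p).1 hp0 ▸ zero_mem_totallyRealPlane
    linarith [Qfun_eq_zero_of_mem A B hp', hhpos _ (xNormSq_nonneg p)]
  refine ⟨handlebodyCenter_subset_sublevel hc.le hhpos hh_le, hsub c hcc₁,
    frontier_setOf_le_eq_of_fderiv_ne_zero hτ hnocrit, fun p hp => ⟨hnocrit p hp, hpsh p⟩,
    deformation A B (c - c₀), (continuousOn_deformation hAI hBpd _).mono
      (prod_mono subset_rfl (subset_univ _)),
    fun t ht ζ hζ => deformation_mem_sublevel hAI hBpd ht hζ, fun ζ _ => deformation_zero A B _ ζ,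
    fun ζ _ => deformation_one_mem hAI hBpd _ ζ, fun t _ e he => deformation_of_mem hAI hBpd he t⟩

theorem stmt_19 {k m : ℕ} (hk : 1 ≤ k)
    (A : Matrix (Fin k) (Fin k) ℝ) (hAsymm : A.IsSymm) (hAI : (A - 1).PosDef)
    (B : Matrix (Fin m) (Fin m) ℝ) (hBsymm : B.IsSymm) (hBpd : B.PosDef)
    (r ε : ℝ) (hr : 0 < r) (hε : 0 < ε)
    (c₀ R δ : ℝ) (hrc₀ : r < c₀) (hc₀R : c₀ < R) (hδ : 0 < δ)
    (h : ℝ → ℝ)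
    -- `h, τ` are as produced by the handlebody construction
    (hh : ContDiffOn ℝ (⊤ : ℕ∞) h (Ici 0))
    (hhpos : ∀ t ∈ Ici (0 : ℝ), 0 ≤ h t)
    (hmono : ∀ t ∈ Ici (0 : ℝ), 0 ≤ derivWithin h (Ici 0) t)
    (hconv : ∀ t ∈ Ici (0 : ℝ), 0 ≤ derivWithin (derivWithin h (Ici 0)) (Ici 0) t)
    -- `τ = Q - h(|x|²)` is strongly plurisubharmonic
    (hpsh : ∀ ζ v : (Fin k → ℂ) × (Fin m → ℂ), v ≠ 0 →
      0 < leviForm (fun ζ => Qfun A B ζ - h (∑ i, (ζ.1 i).re ^ 2)) ζ v)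
    -- `τ = Q - δ|x|²` for `|x|² ≤ r`,  `τ = ρ + c₀` for `|x|² ≥ R`
    (hi : ∀ ζ : (Fin k → ℂ) × (Fin m → ℂ), (∑ i, (ζ.1 i).re ^ 2) ≤ r →
      h (∑ i, (ζ.1 i).re ^ 2) = δ * ∑ i, (ζ.1 i).re ^ 2)
    (hii : ∀ ζ : (Fin k → ℂ) × (Fin m → ℂ), R ≤ (∑ i, (ζ.1 i).re ^ 2) →
      Qfun A B ζ - h (∑ i, (ζ.1 i).re ^ 2) =
        (Qfun A B ζ - ∑ i, (ζ.1 i).re ^ 2) + c₀)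
    -- `{ρ ≤ -c₀} ∪ Λᵏ ⊆ {τ ≤ 0} ⊆ {ρ < -r} ∪ {Q < ε}`
    (hiii₁ : ({ζ : (Fin k → ℂ) × (Fin m → ℂ) |
          Qfun A B ζ - (∑ i, (ζ.1 i).re ^ 2) ≤ -c₀} ∪
        {ζ : (Fin k → ℂ) × (Fin m → ℂ) | (∀ i, (ζ.1 i).im = 0) ∧ ζ.2 = 0}) ⊆
      {ζ : (Fin k → ℂ) × (Fin m → ℂ) | Qfun A B ζ - h (∑ i, (ζ.1 i).re ^ 2) ≤ 0})
    (hiii₂ : {ζ : (Fin k → ℂ) × (Fin m → ℂ) |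
        Qfun A B ζ - h (∑ i, (ζ.1 i).re ^ 2) ≤ 0} ⊆
      ({ζ : (Fin k → ℂ) × (Fin m → ℂ) |
          Qfun A B ζ - (∑ i, (ζ.1 i).re ^ 2) < -r} ∪
        {ζ : (Fin k → ℂ) × (Fin m → ℂ) | Qfun A B ζ < ε}))
    -- the origin is the only critical point of `τ`
    (hcrit : ∀ ζ : (Fin k → ℂ) × (Fin m → ℂ),
      fderiv ℝ (fun ζ => Qfun A B ζ - h (∑ i, (ζ.1 i).re ^ 2)) ζ = 0 ↔ ζ = 0) :
    ∃ c₁ > (0 : ℝ), ∀ c : ℝ, 0 < c → c < c₁ →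
      -- (a) `E_{c-c₀} ⊆ K_c ⊆ {ρ < -r} ∪ {Q < ε}`
      (({ζ : (Fin k → ℂ) × (Fin m → ℂ) |
            Qfun A B ζ - (∑ i, (ζ.1 i).re ^ 2) ≤ c - c₀} ∪
          {ζ : (Fin k → ℂ) × (Fin m → ℂ) | (∀ i, (ζ.1 i).im = 0) ∧ ζ.2 = 0}) ⊆
        {ζ : (Fin k → ℂ) × (Fin m → ℂ) |
          Qfun A B ζ - h (∑ i, (ζ.1 i).re ^ 2) ≤ c}) ∧
      ({ζ : (Fin k → ℂ) × (Fin m → ℂ) |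
          Qfun A B ζ - h (∑ i, (ζ.1 i).re ^ 2) ≤ c} ⊆
        ({ζ : (Fin k → ℂ) × (Fin m → ℂ) |
            Qfun A B ζ - (∑ i, (ζ.1 i).re ^ 2) < -r} ∪
          {ζ : (Fin k → ℂ) × (Fin m → ℂ) | Qfun A B ζ < ε})) ∧
      -- (b) the boundary `bK_c = {τ = c}` contains no critical point of `τ`,
      -- and the Levi form of `τ` is positive there
      (frontier {ζ : (Fin k → ℂ) × (Fin m → ℂ) |
          Qfun A B ζ - h (∑ i, (ζ.1 i).re ^ 2) ≤ c} =
        {ζ : (Fin k → ℂ) × (Fin m → ℂ) |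
          Qfun A B ζ - h (∑ i, (ζ.1 i).re ^ 2) = c}) ∧
      (∀ p : (Fin k → ℂ) × (Fin m → ℂ),
        Qfun A B p - h (∑ i, (p.1 i).re ^ 2) = c →
        fderiv ℝ (fun ζ => Qfun A B ζ - h (∑ i, (ζ.1 i).re ^ 2)) p ≠ 0 ∧
        ∀ v : (Fin k → ℂ) × (Fin m → ℂ), v ≠ 0 →
          0 < leviForm (fun ζ => Qfun A B ζ - h (∑ i, (ζ.1 i).re ^ 2)) p v) ∧
      -- (c) a strong deformation retraction of `K_c` onto `E_{c-c₀}`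
      (∃ H : ℝ × ((Fin k → ℂ) × (Fin m → ℂ)) → (Fin k → ℂ) × (Fin m → ℂ),
        ContinuousOn H ((Icc (0 : ℝ) 1) ×ˢ
          {ζ : (Fin k → ℂ) × (Fin m → ℂ) |
            Qfun A B ζ - h (∑ i, (ζ.1 i).re ^ 2) ≤ c}) ∧
        (∀ t ∈ Icc (0 : ℝ) 1, ∀ ζ : (Fin k → ℂ) × (Fin m → ℂ),
          Qfun A B ζ - h (∑ i, (ζ.1 i).re ^ 2) ≤ c →
          Qfun A B (H (t, ζ)) - h (∑ i, ((H (t, ζ)).1 i).re ^ 2) ≤ c) ∧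
        (∀ ζ : (Fin k → ℂ) × (Fin m → ℂ),
          Qfun A B ζ - h (∑ i, (ζ.1 i).re ^ 2) ≤ c → H (0, ζ) = ζ) ∧
        (∀ ζ : (Fin k → ℂ) × (Fin m → ℂ),
          Qfun A B ζ - h (∑ i, (ζ.1 i).re ^ 2) ≤ c →
          H (1, ζ) ∈
            ({ζ : (Fin k → ℂ) × (Fin m → ℂ) |
                Qfun A B ζ - (∑ i, (ζ.1 i).re ^ 2) ≤ c - c₀} ∪
              {ζ : (Fin k → ℂ) × (Fin m → ℂ) | (∀ i, (ζ.1 i).im = 0) ∧ ζ.2 = 0})) ∧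
        (∀ t ∈ Icc (0 : ℝ) 1, ∀ e ∈
            ({ζ : (Fin k → ℂ) × (Fin m → ℂ) |
                Qfun A B ζ - (∑ i, (ζ.1 i).re ^ 2) ≤ c - c₀} ∪
              {ζ : (Fin k → ℂ) × (Fin m → ℂ) | (∀ i, (ζ.1 i).im = 0) ∧ ζ.2 = 0}),
          H (t, e) = e)) :=
  stmt_19_general hk A hAI B hBpd r ε c₀ R hrc₀ h hh hhpos hpsh hii hiii₁ hiii₂ hcrit
end
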